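/- arXiv:1204.5834 — 2 statements merged into one kernel-verified Lean document; each statement's English description precedes it below -/
import Mathlib

section
/- Let N ≥ 1 be an integer, let 0 < p < 1, let 0 < ε < 1, and set μ = Np. If μ ≤ 4·ln(2/ε), then ∑_{k = 0,…,N with |k − μ| > 4·ln(2/ε)} B(k; N, p) < ε. -/
/-! Since `μ ≤ 4 ln(2/ε)` and `k ≥ 0`, only the upper tail `k ≥ μ + 4 ln(2/ε)` can contribute.
The Chernoff bound with exponent `t = 1` bounds it by `exp (μ (e - 1) - μ - 4 ln(2/ε))`,
and `μ (e - 2) - 4 ln(2/ε) ≤ -4 (3 - e) ln(2/ε) < -ln(2/ε) < ln ε` because `4 (3 - e) > 1`. -/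

open Finset Real

noncomputable def binomialMass (N : ℕ) (p : ℝ) (k : ℕ) : ℝ :=
  N.choose k * p ^ k * (1 - p) ^ (N - k)

lemma sum_binomialMass_mul_exp (N : ℕ) (p t : ℝ) :
    ∑ k ∈ range (N + 1), binomialMass N p k * exp (t * k) = (p * exp t + (1 - p)) ^ N := by
  rw [add_pow]
  refine sum_congr rfl fun k _ => ?_
  rw [binomialMass, mul_pow, mul_comm t, exp_nat_mul]
  ring

section binomialMass

variable {p : ℝ} (hp0 : 0 ≤ p) (hp1 : p ≤ 1) (N : ℕ)
include hp0 hp1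

lemma binomialMass_nonneg (k : ℕ) : 0 ≤ binomialMass N p k := by
  have : 0 ≤ 1 - p := by linarith
  unfold binomialMass
  positivity

lemma binomial_mgf_le_exp (t : ℝ) : (p * exp t + (1 - p)) ^ N ≤ exp (N * p * (exp t - 1)) := by
  have hbase : p * exp t + (1 - p) ≤ exp (p * (exp t - 1)) := by
    linarith [add_one_le_exp (p * (exp t - 1))]
  calc (p * exp t + (1 - p)) ^ N ≤ exp (p * (exp t - 1)) ^ N := by gcongr
    _ = exp (N * p * (exp t - 1)) := by rw [← exp_nat_mul, mul_assoc]

lemma binomial_upper_tail_le_exp (a : ℝ) {t : ℝ} (ht : 0 ≤ t) :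
    ∑ k ∈ (range (N + 1)).filter (fun k : ℕ => a ≤ k), binomialMass N p k ≤
      exp (N * p * (exp t - 1) - t * a) := by
  have hmarkov : ∀ k ∈ (range (N + 1)).filter (fun k : ℕ => a ≤ k),
      binomialMass N p k ≤ binomialMass N p k * exp (t * k - t * a) := by
    intro k hk
    have hak : a ≤ k := (mem_filter.mp hk).2
    exact le_mul_of_one_le_right (binomialMass_nonneg hp0 hp1 N k)
      (one_le_exp (by nlinarith))
  calc ∑ k ∈ (range (N + 1)).filter (fun k : ℕ => a ≤ k), binomialMass N p k
      ≤ ∑ k ∈ (range (N + 1)).filter (fun k : ℕ => a ≤ k),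
          binomialMass N p k * exp (t * k - t * a) := sum_le_sum hmarkov
    _ ≤ ∑ k ∈ range (N + 1), binomialMass N p k * exp (t * k - t * a) :=
        sum_le_sum_of_subset_of_nonneg (filter_subset _ _) fun k _ _ =>
          mul_nonneg (binomialMass_nonneg hp0 hp1 N k) (exp_pos _).le
    _ = exp (-(t * a)) * (p * exp t + (1 - p)) ^ N := by
        simp only [sub_eq_add_neg (t * _), exp_add, ← sum_binomialMass_mul_exp, mul_sum]
        exact sum_congr rfl fun k _ => by ring
    _ ≤ exp (-(t * a)) * exp (N * p * (exp t - 1)) :=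
        mul_le_mul_of_nonneg_left (binomial_mgf_le_exp hp0 hp1 N t) (exp_pos _).le
    _ = exp (N * p * (exp t - 1) - t * a) := by rw [← exp_add]; ring_nf

end binomialMass

lemma add_le_of_lt_abs_sub {x μ L : ℝ} (hx : 0 ≤ x) (hμ : μ ≤ L) (h : L < |x - μ|) :
    μ + L ≤ x := by
  rcases abs_cases (x - μ) with ⟨habs, _⟩ | ⟨habs, _⟩ <;> rw [habs] at h <;> linarith

lemma exp_chernoff_exponent_lt {ε μ : ℝ} (hε0 : 0 < ε) (hε1 : ε < 1)
    (hμ : μ ≤ 4 * log (2 / ε)) :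
    exp (μ * (exp 1 - 1) - 1 * (μ + 4 * log (2 / ε))) < ε := by
  have hlog : 0 < log (2 / ε) := log_pos (by rw [lt_div_iff₀ hε0]; linarith)
  have hlogε : log ε = log 2 - log (2 / ε) := by
    rw [log_div two_ne_zero hε0.ne']
    ring
  have he2 : 0 ≤ exp 1 - 2 := by linarith [add_one_le_exp (1 : ℝ)]
  have he3 : exp 1 < 2.7182818286 := exp_one_lt_d9
  have hμe : μ * (exp 1 - 2) ≤ 4 * log (2 / ε) * (exp 1 - 2) :=
    mul_le_mul_of_nonneg_right hμ he2
  calc exp (μ * (exp 1 - 1) - 1 * (μ + 4 * log (2 / ε))) < exp (log ε) := by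
        rw [exp_lt_exp, hlogε]
        nlinarith [log_pos one_lt_two]
    _ = ε := exp_log hε0

theorem binomial_tail_lt_of_small_mean_general
    (N : ℕ) (p ε : ℝ)
    (hp0 : 0 < p) (hp1 : p < 1) (hε0 : 0 < ε) (hε1 : ε < 1)
    (hμ : (N : ℝ) * p ≤ 4 * Real.log (2 / ε)) :
    ∑ k ∈ (Finset.range (N + 1)).filter
        (fun k : ℕ => 4 * Real.log (2 / ε) < |(k : ℝ) - N * p|),
      (N.choose k : ℝ) * p ^ k * (1 - p) ^ (N - k) < ε := by
  have htail : (range (N + 1)).filter (fun k : ℕ => 4 * log (2 / ε) < |(k : ℝ) - N * p|) ⊆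
      (range (N + 1)).filter (fun k : ℕ => N * p + 4 * log (2 / ε) ≤ k) :=
    monotone_filter_right _ fun k _ hk => add_le_of_lt_abs_sub k.cast_nonneg hμ hk
  calc _ ≤ ∑ k ∈ (range (N + 1)).filter (fun k : ℕ => N * p + 4 * log (2 / ε) ≤ k),
          binomialMass N p k :=
        sum_le_sum_of_subset_of_nonneg htail fun k _ _ =>
          binomialMass_nonneg hp0.le hp1.le N k
    _ ≤ exp (N * p * (exp 1 - 1) - 1 * (N * p + 4 * log (2 / ε))) :=
        binomial_upper_tail_le_exp hp0.le hp1.le N _ zero_le_one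
    _ < ε := exp_chernoff_exponent_lt hε0 hε1 hμ

/-- Let `N ≥ 1` be an integer, `0 < p < 1`, `0 < ε < 1`, and set `μ = N·p`.
If `μ ≤ 4·ln(2/ε)`, then `∑_{k ≤ N, |k - μ| > 4·ln(2/ε)} B(k; N, p) < ε`, where
`B(k; N, p) = C(N,k)·p^k·(1-p)^(N-k)`. -/
theorem binomial_tail_lt_of_small_mean
    (N : ℕ) (hN : 1 ≤ N) (p ε : ℝ)
    (hp0 : 0 < p) (hp1 : p < 1) (hε0 : 0 < ε) (hε1 : ε < 1)
    (hμ : (N : ℝ) * p ≤ 4 * Real.log (2 / ε)) :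
    ∑ k ∈ (Finset.range (N + 1)).filter
        (fun k : ℕ => 4 * Real.log (2 / ε) < |(k : ℝ) - N * p|),
      (N.choose k : ℝ) * p ^ k * (1 - p) ^ (N - k) < ε :=
  binomial_tail_lt_of_small_mean_general N p ε hp0 hp1 hε0 hε1 hμ
end

section
/- Let N ≥ 1 be an integer, 0 < p < 1, and let μ̄, Δ⁻, Δ⁺, I, α⁺, α⁻ be as defined, with 0 ≤ μ̄ − Δ⁻ and μ̄ + Δ⁺ ≤ N. Let B_Δ(k; N, p) = B(k; N, p) / (∑_{j ∈ I} B(j; N, p)) for k ∈ I, and define transition probabilities on I by P(k, k+1) = α⁺(k)/4, P(k, k−1) = α⁻(k)/4, P(k, k) = 1 − α⁺(k)/4 − α⁻(k)/4, and P(j, k) = 0 whenever |j − k| > 1. Then B_Δ is a stationary distribution of this Markov chain: for every k ∈ I, ∑_{j ∈ I} B_Δ(j; N, p)·P(j, k) = B_Δ(k; N, p). -/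
/-- Binomial probability mass function `B(k; N, p) = C(N,k)·p^k·(1-p)^(N-k)`. -/
noncomputable def binomialPMF (N : ℕ) (p : ℝ) (k : ℕ) : ℝ :=
  (N.choose k : ℝ) * p ^ k * (1 - p) ^ (N - k)

/-- The Metropolis acceptance function `α⁺`. -/
noncomputable def alphaPlus (N : ℕ) (p : ℝ) (μbar Δp : ℕ) (k : ℕ) : ℝ :=
  if k < μbar then 1
  else if k < μbar + Δp then ((N : ℝ) - k) / ((k : ℝ) + 1) * (p / (1 - p))
  else 0

/-- The Metropolis acceptance function `α⁻`. -/
noncomputable def alphaMinus (N : ℕ) (p : ℝ) (μbar Δm : ℕ) (k : ℕ) : ℝ :=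
  if μbar < k then 1
  else if μbar - Δm < k then (k : ℝ) / ((N : ℝ) - k + 1) * ((1 - p) / p)
  else 0

/-- The transition probabilities of the Metropolis chain on `I = [μ̄ - Δ⁻, μ̄ + Δ⁺]`. -/
noncomputable def metropolisTrans (N : ℕ) (p : ℝ) (μbar Δm Δp : ℕ) (j k : ℕ) : ℝ :=
  if k = j + 1 then alphaPlus N p μbar Δp j / 4
  else if j = k + 1 then alphaMinus N p μbar Δm j / 4
  else if j = k then 1 - alphaPlus N p μbar Δp j / 4 - alphaMinus N p μbar Δm j / 4
  else 0

/-!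
The Metropolis chain is a lazy birth–death chain on `I`, and the acceptance functions are chosen
so that `B(k)·α⁺(k) = B(k+1)·α⁻(k+1)` (detailed balance), a consequence of
`C(N,k+1)·(k+1) = C(N,k)·(N-k)`. The vanishing of `α⁻` and `α⁺` at the two ends of `I` makes the
chain reflect there, and summing the flows into a state `k` then gives back `B(k)`; the
normalisation by `∑_{j ∈ I} B(j)` passes through the linear equation.
-/

open Finset

section BirthDeath

variable {R : Type*} [CommRing R]

def birthDeathKernel (up down : ℕ → R) (j k : ℕ) : R :=
  if k = j + 1 then up j
  else if j = k + 1 then down j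
  else if j = k then 1 - up j - down j
  else 0

variable (π up down : ℕ → R) {lo hi k : ℕ}

lemma mul_birthDeathKernel (j k : ℕ) :
    π j * birthDeathKernel up down j k =
      (if k = j + 1 then π j * up j else 0) + (if j = k + 1 then π j * down j else 0) +
        (if j = k then π j * (1 - up j - down j) else 0) := by
  unfold birthDeathKernel
  split_ifs <;> first | omega | ring

lemma sum_inflow_from_below (hlo : down lo = 0)
    (hbal : ∀ j, lo ≤ j → j < hi → π j * up j = π (j + 1) * down (j + 1))
    (hk : k ∈ Icc lo hi) :
    ∑ j ∈ Icc lo hi, (if k = j + 1 then π j * up j else 0) = π k * down k := by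
  rw [mem_Icc] at hk
  rcases hk.1.eq_or_lt with rfl | hlt
  · rw [hlo, mul_zero]
    exact sum_eq_zero fun j hj => if_neg (by rw [mem_Icc] at hj; omega)
  · obtain ⟨m, rfl⟩ : ∃ m, k = m + 1 := ⟨k - 1, by omega⟩
    simp only [Nat.succ_inj, sum_ite_eq, mem_Icc]
    rw [if_pos ⟨by omega, by omega⟩, hbal m (by omega) (by omega)]

lemma sum_inflow_from_above (hhi : up hi = 0)
    (hbal : ∀ j, lo ≤ j → j < hi → π j * up j = π (j + 1) * down (j + 1))
    (hk : k ∈ Icc lo hi) :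
    ∑ j ∈ Icc lo hi, (if j = k + 1 then π j * down j else 0) = π k * up k := by
  rw [mem_Icc] at hk
  rw [sum_ite_eq']
  rcases hk.2.eq_or_lt with rfl | hlt
  · rw [if_neg (by rw [mem_Icc]; omega), hhi, mul_zero]
  · rw [if_pos (mem_Icc.mpr ⟨by omega, hlt⟩), hbal k hk.1 hlt]

theorem sum_mul_birthDeathKernel_of_detailedBalance (hlo : down lo = 0) (hhi : up hi = 0)
    (hbal : ∀ j, lo ≤ j → j < hi → π j * up j = π (j + 1) * down (j + 1))
    (hk : k ∈ Icc lo hi) :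
    ∑ j ∈ Icc lo hi, π j * birthDeathKernel up down j k = π k := by
  simp only [mul_birthDeathKernel, sum_add_distrib, sum_ite_eq', if_pos hk,
    sum_inflow_from_below π up down hlo hbal hk, sum_inflow_from_above π up down hhi hbal hk]
  ring

end BirthDeath

lemma binomialPMF_succ_mul (N : ℕ) (p : ℝ) {j : ℕ} (hj : j < N) :
    binomialPMF N p (j + 1) * ((j + 1) * (1 - p)) = binomialPMF N p j * ((N - j) * p) := by
  have hchoose : (N.choose (j + 1) : ℝ) * (j + 1) = N.choose j * (N - j) := by
    have h := congrArg (Nat.cast : ℕ → ℝ) (Nat.choose_succ_right_eq N j)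
    push_cast [Nat.cast_sub hj.le] at h
    exact h
  have hpow : (1 - p) ^ (N - j) = (1 - p) ^ (N - (j + 1)) * (1 - p) := by
    rw [← pow_succ]; congr 1; omega
  unfold binomialPMF
  rw [hpow, pow_succ]
  linear_combination p ^ j * p * (1 - p) ^ (N - (j + 1)) * (1 - p) * hchoose

lemma binomialPMF_mul_alphaPlus (N : ℕ) {p : ℝ} (hp0 : p ≠ 0) (hp1 : p ≠ 1)
    {μbar Δm Δp j : ℕ} (hΔp : μbar + Δp ≤ N) (hlo : μbar - Δm ≤ j) (hj : j < μbar + Δp) :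
    binomialPMF N p j * alphaPlus N p μbar Δp j =
      binomialPMF N p (j + 1) * alphaMinus N p μbar Δm (j + 1) := by
  have hjN : j < N := hj.trans_le hΔp
  have hstep := binomialPMF_succ_mul N p hjN
  have hq : 1 - p ≠ 0 := sub_ne_zero.mpr hp1.symm
  have hNj : (N : ℝ) - j ≠ 0 := sub_ne_zero.mpr (by exact_mod_cast hjN.ne')
  have hcast : (N : ℝ) - (j + 1 : ℕ) + 1 = N - j := by push_cast; ring
  unfold alphaPlus alphaMinus
  by_cases hjμ : j < μbar
  · rw [if_pos hjμ, if_neg (by omega), if_pos (by omega), hcast]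
    push_cast
    field_simp
    linear_combination -hstep
  · rw [if_neg hjμ, if_pos hj, if_pos (by omega)]
    field_simp
    linear_combination -hstep

lemma alphaMinus_left_end (N : ℕ) (p : ℝ) (μbar Δm : ℕ) :
    alphaMinus N p μbar Δm (μbar - Δm) = 0 := by
  unfold alphaMinus
  rw [if_neg (by omega), if_neg (by omega)]

lemma alphaPlus_right_end (N : ℕ) (p : ℝ) (μbar Δp : ℕ) :
    alphaPlus N p μbar Δp (μbar + Δp) = 0 := by
  unfold alphaPlus
  rw [if_neg (by omega), if_neg (by omega)]

lemma metropolisTrans_eq_birthDeathKernel (N : ℕ) (p : ℝ) (μbar Δm Δp : ℕ) :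
    metropolisTrans N p μbar Δm Δp =
      birthDeathKernel (fun j => alphaPlus N p μbar Δp j / 4)
        (fun j => alphaMinus N p μbar Δm j / 4) :=
  rfl

theorem metropolis_stationary_general
    (N : ℕ) (p : ℝ) (hp0 : 0 < p) (hp1 : p < 1)
    (μbar Δm Δp : ℕ)
    (hΔp : μbar + Δp ≤ N) :
    ∀ k ∈ Finset.Icc (μbar - Δm) (μbar + Δp),
      ∑ j ∈ Finset.Icc (μbar - Δm) (μbar + Δp),
          (binomialPMF N p j / ∑ i ∈ Finset.Icc (μbar - Δm) (μbar + Δp), binomialPMF N p i) *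
            metropolisTrans N p μbar Δm Δp j k =
        binomialPMF N p k / ∑ i ∈ Finset.Icc (μbar - Δm) (μbar + Δp), binomialPMF N p i := by
  intro k hk
  have hbal : ∀ j, μbar - Δm ≤ j → j < μbar + Δp →
      binomialPMF N p j * (alphaPlus N p μbar Δp j / 4) =
        binomialPMF N p (j + 1) * (alphaMinus N p μbar Δm (j + 1) / 4) := fun j hlo hj => by
    rw [mul_div_assoc', mul_div_assoc', binomialPMF_mul_alphaPlus N hp0.ne' hp1.ne hΔp hlo hj]
  have hstat := sum_mul_birthDeathKernel_of_detailedBalance (binomialPMF N p)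
    (fun j => alphaPlus N p μbar Δp j / 4) (fun j => alphaMinus N p μbar Δm j / 4)
    (by rw [alphaMinus_left_end, zero_div]) (by rw [alphaPlus_right_end, zero_div]) hbal hk
  rw [metropolisTrans_eq_birthDeathKernel, ← hstat, sum_div]
  exact sum_congr rfl fun j _ => div_mul_eq_mul_div _ _ _

/-- The truncated binomial distribution
`B_Δ(k; N, p) = B(k; N, p)/∑_{j ∈ I} B(j; N, p)` is a stationary distribution of the
Metropolis chain: for every `k ∈ I`, `∑_{j ∈ I} B_Δ(j; N, p)·P(j, k) = B_Δ(k; N, p)`. -/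
theorem metropolis_stationary
    (N : ℕ) (hN : 1 ≤ N) (p : ℝ) (hp0 : 0 < p) (hp1 : p < 1)
    (μbar Δm Δp : ℕ)
    (hμbar : μbar =
      if (N : ℝ) * p - ⌊(N : ℝ) * p⌋₊ ≤ 1 - p then ⌊(N : ℝ) * p⌋₊ else ⌈(N : ℝ) * p⌉₊)
    (hΔm : Δm ≤ μbar) (hΔp : μbar + Δp ≤ N) :
    ∀ k ∈ Finset.Icc (μbar - Δm) (μbar + Δp),
      ∑ j ∈ Finset.Icc (μbar - Δm) (μbar + Δp),
          (binomialPMF N p j / ∑ i ∈ Finset.Icc (μbar - Δm) (μbar + Δp), binomialPMF N p i) *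
            metropolisTrans N p μbar Δm Δp j k =
        binomialPMF N p k / ∑ i ∈ Finset.Icc (μbar - Δm) (μbar + Δp), binomialPMF N p i :=
  metropolis_stationary_general N p hp0 hp1 μbar Δm Δp hΔp
end
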